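/- For correlated Erdős–Rényi random graphs with structures S_a, S_b, both (1/C(n,2)) log(1/P_{S_a|G_b}(S_a|G_b)) and (1/C(n,2)) log(1/P_{S_a|S_b}(S_a|S_b)) converge in probability to H(A|B) as n → ∞. -/

import Mathlib

open Finset Filter

namespace GraphSI

/-- A (weighted) graph on vertex set `Fin n` with marks in `α`, identified with the
function assigning a mark to each unordered pair of vertices. -/
abbrev Graph (n : ℕ) (α : Type*) := Sym2 (Fin n) → α

/-- Relabeling of the vertices of a graph by a permutation `π`:
the `(i,j)` entry of `π(g)` is the `(π⁻¹ i, π⁻¹ j)` entry of `g`. -/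
def relabel {n : ℕ} {α : Type*} (π : Equiv.Perm (Fin n)) (g : Graph n α) : Graph n α :=
  fun e => g (e.map π.symm)

/-- The unordered pairs `{i,j}` with `i ≠ j` (i.e. the pairs `i < j`). -/
def edgePairs (n : ℕ) : Finset (Sym2 (Fin n)) :=
  Finset.univ.filter (fun e => ¬ e.IsDiag)

/-- Joint probability of a pair of graphs under the correlated Erdős–Rényi model with
per-edge joint mark distribution `P`. -/
def cer {n : ℕ} {α β : Type*} (P : α × β → ℝ) (ga : Graph n α) (gb : Graph n β) : ℝ :=
  ∏ e ∈ edgePairs n, P (ga e, gb e)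

/-- Probability of a graph under the Erdős–Rényi model with i.i.d. edge marks `P`. -/
def erP {n : ℕ} {β : Type*} (P : β → ℝ) (g : Graph n β) : ℝ :=
  ∏ e ∈ edgePairs n, P (g e)

/-- Base-2 Shannon entropy of a pmf on a finite type (with the convention 0 log 0 = 0). -/
noncomputable def H2 {γ : Type*} [Fintype γ] (P : γ → ℝ) : ℝ :=
  ∑ x, P x * Real.logb 2 (P x)⁻¹

/-- Conditional entropy `H(A|B) = H(A,B) - H(B)` for a joint pmf on `α × β`. -/
noncomputable def condH {α β : Type*} [Fintype α] [Fintype β] (P : α × β → ℝ) : ℝ :=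
  H2 P - H2 (fun b => ∑ a, P (a, b))

/-- `C(n,2) = n(n-1)/2` as a real number. -/
def Cn2 (n : ℕ) : ℝ := n.choose 2

/-- Probability of an event under a pmf on a finite sample space. -/
noncomputable def prob {Ω : Type*} [Fintype Ω] (P : Ω → ℝ) (E : Set Ω) : ℝ :=
  ∑ ω, E.indicator P ω

/-- Maximum of a real-valued function over all permutations of `[n]`. -/
def maxPerm {n : ℕ} (f : Equiv.Perm (Fin n) → ℝ) : ℝ :=
  Finset.univ.sup' ⟨1, Finset.mem_univ 1⟩ f

instance {n : ℕ} {γ : Type*} [DecidableEq γ] (g : Graph n γ) :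
    DecidablePred (fun g' : Graph n γ => ∃ π : Equiv.Perm (Fin n), relabel π g = g') :=
  fun _ => Fintype.decidableExistsFintype

/-- Sum of `f` over the isomorphism class (the structure) of `g`. -/
def isoSum {n : ℕ} {γ : Type*} [Fintype γ] [DecidableEq γ]
    (f : Graph n γ → ℝ) (g : Graph n γ) : ℝ :=
  ∑ g' ∈ Finset.univ.filter
      (fun g' => ∃ π : Equiv.Perm (Fin n), relabel π g = g'), f g'

/-- Order of the automorphism group of `g`. -/
def autCard {n : ℕ} {γ : Type*} [DecidableEq γ] (g : Graph n γ) : ℕ :=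
  (Finset.univ.filter (fun π : Equiv.Perm (Fin n) => relabel π g = g)).card

/-!
Write `D = ∑_{g_a'} cer P g_a' g_b` and `N` for the sum of `cer P · g_b` over the isomorphism
class of `g_a`, so that `P_{S_a|G_b} = N / D`. Wherever `cer P g_a g_b ≠ 0`,
`log₂ (D / N) = n log₂ |α| + I - log₂ (N / cer P g_a g_b)`, where `I` is a sum over the `C(n,2)`
edges of independent copies of `log₂ (1 / P(a|b))`, whose mean is `H(A|B)`. A Chernoff bound
makes a deviation of `I` by `δ C(n,2)` have probability `O(Bⁿ ρ^C(n,2))` with `ρ < 1`. The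
correction `log₂ (N / cer)` is nonnegative, and summing `N` over all pairs counts each weight at
most `n!` times, so by Markov it exceeds `δ C(n,2) / 2` with probability at most
`n! Bⁿ 2^(-δ C(n,2) / 2)`. As `C(n,2)` is quadratic in `n`, all these bounds tend to zero. The
ratio for `S_a` given `S_b` equals the one given `G_b`: its numerator and denominator are sums
over the isomorphism class of `g_b` of quantities invariant under relabeling `g_b`, so both are
the size of that class times the corresponding quantities for `G_b`.

Here `B = |α| |β|`: the weights `cer P` have total mass `Bⁿ`, not `1`, because the diagonal
marks `e.IsDiag` are unconstrained.
-/

open scoped Nat Topology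
open Real (exp logb)

section Relabel

variable {n : ℕ} {γ : Type*}

@[simp]
lemma relabel_one (g : Graph n γ) : relabel 1 g = g := by
  funext e
  simp [relabel, ← Equiv.Perm.inv_def]

lemma relabel_relabel (σ π : Equiv.Perm (Fin n)) (g : Graph n γ) :
    relabel σ (relabel π g) = relabel (σ * π) g := by
  funext e
  simp only [relabel, Sym2.map_map]
  rfl

def relabelEquiv (σ : Equiv.Perm (Fin n)) : Graph n γ ≃ Graph n γ where
  toFun := relabel σ
  invFun := relabel σ⁻¹
  left_inv g := by simp [relabel_relabel]
  right_inv g := by simp [relabel_relabel]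

lemma cer_relabel {α β : Type*} (P : α × β → ℝ) (σ : Equiv.Perm (Fin n))
    (ga : Graph n α) (gb : Graph n β) :
    cer P (relabel σ ga) (relabel σ gb) = cer P ga gb := by
  have hmem : ∀ τ : Equiv.Perm (Fin n), ∀ e ∈ edgePairs n, e.map τ ∈ edgePairs n := by
    intro τ e he
    simpa [edgePairs, Sym2.isDiag_map τ.injective] using he
  refine prod_nbij' (fun e => e.map σ.symm) (fun e => e.map σ) (hmem _) (hmem _)
    (fun e _ => ?_) (fun e _ => ?_) (fun e _ => rfl) <;> simp [Sym2.map_map]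

lemma cer_relabel_right {α β : Type*} (P : α × β → ℝ) (σ : Equiv.Perm (Fin n))
    (ga : Graph n α) (gb : Graph n β) :
    cer P ga (relabel σ gb) = cer P (relabel σ⁻¹ ga) gb := by
  rw [← cer_relabel P σ⁻¹ ga, relabel_relabel, inv_mul_cancel, relabel_one]

variable [Fintype γ] [DecidableEq γ]

def isoClass (g : Graph n γ) : Finset (Graph n γ) :=
  univ.filter (fun g' => ∃ π : Equiv.Perm (Fin n), relabel π g = g')

lemma isoSum_eq_sum_isoClass (f : Graph n γ → ℝ) (g : Graph n γ) :
    isoSum f g = ∑ g' ∈ isoClass g, f g' := rfl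

lemma mem_isoClass_self (g : Graph n γ) : g ∈ isoClass g :=
  mem_filter.2 ⟨mem_univ _, 1, relabel_one g⟩

lemma isoClass_eq_image (g : Graph n γ) :
    isoClass g = univ.image (fun π : Equiv.Perm (Fin n) => relabel π g) := by
  ext g'
  simp [isoClass]

lemma relabel_mem_isoClass_iff {σ : Equiv.Perm (Fin n)} {g g' : Graph n γ} :
    relabel σ g' ∈ isoClass g ↔ g' ∈ isoClass g := by
  simp only [isoClass, mem_filter, mem_univ, true_and]
  constructor
  · rintro ⟨π, hπ⟩
    exact ⟨σ⁻¹ * π, by rw [← relabel_relabel, hπ, relabel_relabel, inv_mul_cancel, relabel_one]⟩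
  · rintro ⟨π, rfl⟩
    exact ⟨σ * π, (relabel_relabel σ π g).symm⟩

lemma le_isoSum {f : Graph n γ → ℝ} (hf : ∀ g, 0 ≤ f g) (g : Graph n γ) : f g ≤ isoSum f g :=
  single_le_sum (fun g' _ => hf g') (mem_isoClass_self g)

lemma isoSum_comp_relabel (f : Graph n γ → ℝ) (σ : Equiv.Perm (Fin n)) (g : Graph n γ) :
    isoSum (fun g' => f (relabel σ g')) g = isoSum f g :=
  sum_equiv (relabelEquiv σ) (fun _ => relabel_mem_isoClass_iff.symm) (fun _ _ => rfl)

lemma isoSum_eq_card_mul_of_invariant {f : Graph n γ → ℝ}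
    (hf : ∀ (σ : Equiv.Perm (Fin n)) g, f (relabel σ g) = f g) (g : Graph n γ) :
    isoSum f g = #(isoClass g) * f g := by
  rw [isoSum_eq_sum_isoClass, ← nsmul_eq_mul, ← sum_const]
  refine sum_congr rfl fun g' hg' => ?_
  obtain ⟨π, rfl⟩ := (mem_filter.1 hg').2
  exact hf π g

lemma sum_isoSum_le {f : Graph n γ → ℝ} (hf : ∀ g, 0 ≤ f g) :
    ∑ g, isoSum f g ≤ n ! * ∑ g, f g := by
  calc ∑ g, isoSum f g ≤ ∑ g, ∑ π : Equiv.Perm (Fin n), f (relabel π g) :=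
        sum_le_sum fun g _ => by
          rw [isoSum_eq_sum_isoClass, isoClass_eq_image]
          exact sum_image_le_of_nonneg fun g' _ => hf g'
    _ = ∑ π : Equiv.Perm (Fin n), ∑ g, f g :=
        sum_comm.trans (sum_congr rfl fun π _ => (relabelEquiv π).sum_comp f)
    _ = n ! * ∑ g, f g := by simp [Fintype.card_perm]

end Relabel

section Counting

variable {n : ℕ}

lemma card_edgePairs : #(edgePairs n) = n.choose 2 := by
  simpa [edgePairs, Fintype.card_subtype] using Sym2.card_subtype_not_diag (α := Fin n)

lemma card_compl_edgePairs : #(univ \ edgePairs n) = n := by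
  have : univ \ edgePairs n = univ.filter (fun e : Sym2 (Fin n) => e.IsDiag) := by
    ext e
    simp [edgePairs]
  simpa [this, Fintype.card_subtype] using Sym2.card_subtype_diag (α := Fin n)

lemma sum_graph_prod_edgePairs {κ : Type*} [Fintype κ]
    (F : Sym2 (Fin n) → κ → ℝ) :
    ∑ g : Graph n κ, ∏ e ∈ edgePairs n, F e (g e)
      = (Fintype.card κ : ℝ) ^ n * ∏ e ∈ edgePairs n, ∑ x, F e x := by
  set G : Sym2 (Fin n) → κ → ℝ := fun e x => if e ∈ edgePairs n then F e x else 1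
  have hG : ∀ g : Graph n κ, ∏ e ∈ edgePairs n, F e (g e) = ∏ e, G e (g e) := by
    intro g
    simp [G, prod_ite_mem]
  simp_rw [hG]
  rw [← Fintype.prod_sum, ← prod_sdiff (subset_univ (edgePairs n))]
  congr 1
  · rw [prod_congr rfl (g := fun _ => (Fintype.card κ : ℝ))
      fun e he => by simp [G, (Finset.mem_sdiff.1 he).2], prod_const,
      card_compl_edgePairs]
  · exact prod_congr rfl fun e he => by simp [G, he]

end Counting

section Cer

variable {n : ℕ} {α β : Type*}

lemma cer_nonneg {P : α × β → ℝ} (hP0 : ∀ x, 0 ≤ P x) (ga : Graph n α) (gb : Graph n β) :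
    0 ≤ cer P ga gb :=
  prod_nonneg fun _ _ => hP0 _

lemma cer_mul (f g : α × β → ℝ) (ga : Graph n α) (gb : Graph n β) :
    cer (fun x => f x * g x) ga gb = cer f ga gb * cer g ga gb :=
  prod_mul_distrib

variable [Fintype α] [Fintype β]

omit [Fintype β] in
lemma sum_cer_left (F : α × β → ℝ) (gb : Graph n β) :
    ∑ ga : Graph n α, cer F ga gb
      = (Fintype.card α : ℝ) ^ n * ∏ e ∈ edgePairs n, ∑ a, F (a, gb e) :=
  sum_graph_prod_edgePairs fun e a => F (a, gb e)

lemma sum_cer (F : α × β → ℝ) :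
    ∑ p : Graph n α × Graph n β, cer F p.1 p.2
      = (Fintype.card α * Fintype.card β : ℝ) ^ n * (∑ x, F x) ^ n.choose 2 := by
  rw [Fintype.sum_prod_type_right]
  simp_rw [sum_cer_left]
  rw [← mul_sum, sum_graph_prod_edgePairs fun _ b => ∑ a, F (a, b), prod_const, card_edgePairs,
    Fintype.sum_prod_type_right, mul_pow]
  ring

end Cer

section Prob

variable {Ω : Type*} [Fintype Ω] {μ : Ω → ℝ}

lemma prob_nonneg (hμ : ∀ ω, 0 ≤ μ ω) (S : Set Ω) : 0 ≤ prob μ S :=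
  sum_nonneg fun ω _ => Set.indicator_nonneg (fun ω _ => hμ ω) ω

lemma prob_le_sum_of_le {g : Ω → ℝ} (hg : ∀ ω, 0 ≤ g ω) {S : Set Ω}
    (hS : ∀ ω ∈ S, μ ω ≤ g ω) : prob μ S ≤ ∑ ω, g ω :=
  sum_le_sum fun ω _ => Set.indicator_le' hS (fun ω _ => hg ω) ω

lemma prob_le_prob_of_support (hμ : ∀ ω, 0 ≤ μ ω) {S T : Set Ω}
    (h : ∀ ω ∈ S, μ ω ≠ 0 → ω ∈ T) : prob μ S ≤ prob μ T := by
  refine sum_le_sum fun ω _ => ?_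
  by_cases hS : ω ∈ S
  · by_cases hω : μ ω = 0
    · rw [Set.indicator_of_mem hS, hω]
      exact Set.indicator_nonneg (fun ω _ => hμ ω) ω
    · rw [Set.indicator_of_mem hS, Set.indicator_of_mem (h ω hS hω)]
  · rw [Set.indicator_of_notMem hS]
    exact Set.indicator_nonneg (fun ω _ => hμ ω) ω

lemma prob_union_le (hμ : ∀ ω, 0 ≤ μ ω) (S T : Set Ω) :
    prob μ (S ∪ T) ≤ prob μ S + prob μ T := by
  rw [prob, prob, prob, ← sum_add_distrib]
  refine sum_le_sum fun ω _ => ?_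
  rw [← Set.indicator_union_add_inter_apply]
  exact le_add_of_nonneg_right (Set.indicator_nonneg (fun ω _ => hμ ω) ω)

end Prob

lemma exists_pos_sum_mul_exp_lt_one {ι : Type*} [Fintype ι] (p g : ι → ℝ)
    (hp : ∑ x, p x = 1) (hg : ∑ x, p x * g x < 0) :
    ∃ l > 0, ∑ x, p x * exp (l * g x) < 1 := by
  set m : ℝ → ℝ := fun l => ∑ x, p x * exp (l * g x)
  have hm0 : m 0 = 1 := by simp [m, hp]
  have hm' : HasDerivAt m (∑ x, p x * g x) 0 := by
    simpa using HasDerivAt.fun_sum (u := univ) fun x _ =>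
      (((hasDerivAt_id (0 : ℝ)).mul_const (g x)).exp.const_mul (p x))
  obtain ⟨l, hslope, hl⟩ := (((hasDerivAt_iff_tendsto_slope.1 hm').mono_left
    (nhdsGT_le_nhdsNE 0)).eventually (eventually_lt_nhds hg)).and self_mem_nhdsWithin |>.exists
  refine ⟨l, hl, ?_⟩
  rwa [slope_def_field, sub_zero, hm0, div_lt_iff₀ hl, zero_mul, sub_neg] at hslope

lemma tendsto_factorial_mul_pow_mul_pow_choose {B r : ℝ} (hr : |r| < 1) :
    Tendsto (fun n : ℕ => (n ! : ℝ) * B ^ n * r ^ n.choose 2) atTop (𝓝 0) := by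
  set f : ℕ → ℝ := fun n => (n ! : ℝ) * B ^ n * r ^ n.choose 2
  have hstep : ∀ n, f (n + 1) = (n + 1) * B * r ^ n * f n := by
    intro n
    simp only [f, Nat.factorial_succ, Nat.choose_succ_succ', Nat.choose_one_right, pow_succ,
      pow_add]
    push_cast
    ring
  have hratio : Tendsto (fun n : ℕ => ‖(n + 1) * B * r ^ n‖) atTop (𝓝 0) := by
    have := (((tendsto_self_mul_const_pow_of_abs_lt_one hr).add
      (tendsto_pow_atTop_nhds_zero_of_abs_lt_one hr)).mul_const B).norm
    rw [zero_add, zero_mul, norm_zero] at this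
    convert this using 1
    funext n
    ring_nf
  have hev : ∀ᶠ n in atTop, ‖f (n + 1)‖ ≤ 1 / 2 * ‖f n‖ := by
    filter_upwards [hratio.eventually (eventually_le_nhds (by norm_num : (0 : ℝ) < 1 / 2))]
      with n hn
    rw [hstep, norm_mul]
    exact mul_le_mul_of_nonneg_right hn (norm_nonneg _)
  exact (summable_of_ratio_norm_eventually_le (by norm_num) hev).tendsto_atTop_zero

section Chernoff

variable {α β : Type*} [Fintype α] [Fintype β] {P : α × β → ℝ}

lemma prob_sum_edge_ge_le_exp_mul (hP0 : ∀ x, 0 ≤ P x) (n : ℕ) (g : α × β → ℝ) {l : ℝ}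
    (hl : 0 ≤ l) (t : ℝ) :
    prob (fun p : Graph n α × Graph n β => cer P p.1 p.2)
        {p | t ≤ ∑ e ∈ edgePairs n, g (p.1 e, p.2 e)}
      ≤ exp (-(l * t)) * ((Fintype.card α * Fintype.card β : ℝ) ^ n
          * (∑ x, P x * exp (l * g x)) ^ n.choose 2) := by
  have hPexp : ∀ x, 0 ≤ P x * exp (l * g x) := fun x => mul_nonneg (hP0 x) (Real.exp_pos _).le
  calc _ ≤ ∑ p : Graph n α × Graph n β,
        exp (-(l * t)) * cer (fun x => P x * exp (l * g x)) p.1 p.2 := by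
        refine prob_le_sum_of_le (fun p => mul_nonneg (Real.exp_pos _).le (cer_nonneg hPexp _ _))
          fun p hp => ?_
        have hp : t ≤ ∑ e ∈ edgePairs n, g (p.1 e, p.2 e) := hp
        rw [cer_mul, mul_left_comm]
        refine le_mul_of_one_le_right (cer_nonneg hP0 _ _) ?_
        rw [cer, ← Real.exp_sum, ← Real.exp_add, ← mul_sum]
        exact Real.one_le_exp (by nlinarith)
    _ = _ := by rw [← mul_sum, sum_cer]

lemma tendsto_prob_sum_edge_ge (hP0 : ∀ x, 0 ≤ P x) (hP1 : ∑ x, P x = 1) (g : α × β → ℝ)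
    {a : ℝ} (b : ℝ) (hg : ∑ x, P x * g x < a) :
    Tendsto (fun n : ℕ => prob (fun p : Graph n α × Graph n β => cer P p.1 p.2)
        {p | Cn2 n * a + n * b ≤ ∑ e ∈ edgePairs n, g (p.1 e, p.2 e)}) atTop (𝓝 0) := by
  obtain ⟨l, hl, hρ1⟩ := exists_pos_sum_mul_exp_lt_one P (fun x => g x - a) hP1
    (by simpa only [mul_sub, sum_sub_distrib, ← sum_mul, hP1, one_mul, sub_neg] using hg)
  set ρ := ∑ x, P x * exp (l * (g x - a))
  have hρ0 : 0 ≤ ρ := sum_nonneg fun x _ => mul_nonneg (hP0 x) (Real.exp_pos _).le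
  refine squeeze_zero (fun n => prob_nonneg (fun p => cer_nonneg hP0 _ _) _) (fun n => ?_)
    (tendsto_factorial_mul_pow_mul_pow_choose (B := exp (-(l * b)) * Fintype.card α *
      Fintype.card β) (r := ρ) (by rwa [abs_of_nonneg hρ0]))
  have hρ_eq : ρ = exp (-(l * a)) * ∑ x, P x * exp (l * g x) := by
    rw [mul_sum]
    refine sum_congr rfl fun x _ => ?_
    rw [mul_left_comm, ← Real.exp_add]
    ring_nf
  calc _ ≤ _ := prob_sum_edge_ge_le_exp_mul hP0 n g hl.le _
    _ = (exp (-(l * b)) * Fintype.card α * Fintype.card β) ^ n * ρ ^ n.choose 2 := by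
      rw [hρ_eq, Cn2, show -(l * (n.choose 2 * a + n * b)) = n.choose 2 * -(l * a) + n * -(l * b)
        by ring, Real.exp_add, Real.exp_nat_mul, Real.exp_nat_mul]
      ring
    _ ≤ _ := (le_mul_of_one_le_left (mul_nonneg (by positivity) (pow_nonneg hρ0 _))
      (Nat.one_le_cast.2 n.factorial_pos)).trans_eq (mul_assoc _ _ _).symm

end Chernoff

section Information

variable {α β : Type*} [Fintype α] [Fintype β] {P : α × β → ℝ}

def sndMarginal (P : α × β → ℝ) (b : β) : ℝ := ∑ a, P (a, b)

/-- `log₂ (1 / P(a | b))`, written as a difference so that it needs no side condition. -/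
noncomputable def edgeInfo (P : α × β → ℝ) (x : α × β) : ℝ :=
  logb 2 (sndMarginal P x.2) - logb 2 (P x)

noncomputable def condInfo {n : ℕ} (P : α × β → ℝ) (ga : Graph n α) (gb : Graph n β) : ℝ :=
  ∑ e ∈ edgePairs n, edgeInfo P (ga e, gb e)

lemma condH_eq_sum_mul_edgeInfo (P : α × β → ℝ) : condH P = ∑ x, P x * edgeInfo P x := by
  simp only [condH, H2, edgeInfo, sndMarginal, Real.logb_inv, mul_neg, sum_neg_distrib, mul_sub,
    sum_sub_distrib, Fintype.sum_prod_type_right (f := fun x => P x * logb 2 (∑ a, P (a, x.2))),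
    ← sum_mul]
  ring

omit [Fintype β] in
lemma logb_sum_cer_left [DecidableEq α] (hP0 : ∀ x, 0 ≤ P x) {n : ℕ} {ga : Graph n α}
    {gb : Graph n β} (hcer : cer P ga gb ≠ 0) :
    logb 2 (∑ ga', cer P ga' gb)
      = n * logb 2 (Fintype.card α) + logb 2 (cer P ga gb) + condInfo P ga gb := by
  have hD : 0 < ∑ ga', cer P ga' gb :=
    ((cer_nonneg hP0 _ _).lt_of_ne' hcer).trans_le
      (single_le_sum (fun g _ => cer_nonneg hP0 g gb) (mem_univ ga))
  rw [sum_cer_left] at hD ⊢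
  obtain ⟨hA, hQ⟩ := mul_ne_zero_iff.1 hD.ne'
  rw [Real.logb_mul hA hQ, Real.logb_pow, Real.logb_prod _ _ (prod_ne_zero_iff.1 hQ), cer,
    Real.logb_prod _ _ (prod_ne_zero_iff.1 hcer), condInfo]
  simp only [edgeInfo, sndMarginal, sum_sub_distrib]
  ring

end Information

section Structures

variable {α β : Type*} [Fintype α] [Fintype β] [DecidableEq α] {P : α × β → ℝ}

lemma sum_isoSum_cer_le (hP0 : ∀ x, 0 ≤ P x) (hP1 : ∑ x, P x = 1) (n : ℕ) :
    ∑ p : Graph n α × Graph n β, isoSum (fun ga' => cer P ga' p.2) p.1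
      ≤ n ! * (Fintype.card α * Fintype.card β : ℝ) ^ n := by
  calc _ = ∑ gb : Graph n β, ∑ ga : Graph n α, isoSum (fun ga' => cer P ga' gb) ga :=
        Fintype.sum_prod_type_right
          (f := fun p : Graph n α × Graph n β => isoSum (fun ga' => cer P ga' p.2) p.1)
    _ ≤ ∑ gb : Graph n β, n ! * ∑ ga : Graph n α, cer P ga gb :=
        sum_le_sum fun gb _ => sum_isoSum_le fun g => cer_nonneg hP0 g gb
    _ = _ := by
      rw [← mul_sum, ← Fintype.sum_prod_type_right
        (f := fun p : Graph n α × Graph n β => cer P p.1 p.2), sum_cer, hP1, one_pow, mul_one]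

lemma tendsto_prob_logb_isoSum_sub_ge (hP0 : ∀ x, 0 ≤ P x) (hP1 : ∑ x, P x = 1) {c : ℝ}
    (hc : 0 < c) :
    Tendsto (fun n : ℕ => prob (fun p : Graph n α × Graph n β => cer P p.1 p.2)
        {p | cer P p.1 p.2 ≠ 0 ∧ Cn2 n * c ≤
          logb 2 (isoSum (fun ga' => cer P ga' p.2) p.1) - logb 2 (cer P p.1 p.2)})
      atTop (𝓝 0) := by
  set r : ℝ := (2 : ℝ) ^ (-c)
  have hr0 : 0 < r := by positivity
  have hr : |r| < 1 := by
    rw [abs_of_pos hr0]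
    exact Real.rpow_lt_one_of_one_lt_of_neg one_lt_two (neg_lt_zero.2 hc)
  refine squeeze_zero (fun n => prob_nonneg (fun p => cer_nonneg hP0 _ _) _) (fun n => ?_)
    (tendsto_factorial_mul_pow_mul_pow_choose (B := Fintype.card α * Fintype.card β) hr)
  have hr_mul : r ^ n.choose 2 * (2 : ℝ) ^ (Cn2 n * c) = 1 := by
    rw [← Real.rpow_mul_natCast (by norm_num), ← Real.rpow_add two_pos, Cn2,
      show -c * (n.choose 2 : ℝ) + n.choose 2 * c = 0 by ring, Real.rpow_zero]
  refine le_trans (prob_le_sum_of_le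
    (g := fun p => r ^ n.choose 2 * isoSum (fun ga' => cer P ga' p.2) p.1)
    (fun p => mul_nonneg (pow_nonneg hr0.le _)
      ((cer_nonneg hP0 _ _).trans (le_isoSum (fun g => cer_nonneg hP0 g p.2) p.1)))
    fun p ⟨hcer, hp⟩ => ?_) ?_
  · have hc0 : 0 < cer P p.1 p.2 := (cer_nonneg hP0 _ _).lt_of_ne' hcer
    have hN := le_isoSum (fun g => cer_nonneg hP0 g p.2) p.1
    rw [← Real.logb_div (hc0.trans_le hN).ne' hcer,
      Real.le_logb_iff_rpow_le one_lt_two (div_pos (hc0.trans_le hN) hc0),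
      le_div_iff₀ hc0] at hp
    calc cer P p.1 p.2 = r ^ n.choose 2 * ((2 : ℝ) ^ (Cn2 n * c) * cer P p.1 p.2) := by
          rw [← mul_assoc, hr_mul, one_mul]
      _ ≤ _ := mul_le_mul_of_nonneg_left hp (pow_nonneg hr0.le _)
  · rw [← mul_sum]
    calc _ ≤ r ^ n.choose 2 * (n ! * (Fintype.card α * Fintype.card β : ℝ) ^ n) :=
          mul_le_mul_of_nonneg_left (sum_isoSum_cer_le hP0 hP1 n) (pow_nonneg hr0.le _)
      _ = _ := by ring

end Structures

section Deviation

variable {α β : Type*} [Fintype α] [Fintype β] [DecidableEq α] {P : α × β → ℝ}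

/-- `P_{S_a | G_b}(S_a | G_b)` in the paper's notation. -/
noncomputable def probStructGivenGraph {n : ℕ} (P : α × β → ℝ) (ga : Graph n α)
    (gb : Graph n β) : ℝ :=
  isoSum (fun ga' => cer P ga' gb) ga / ∑ ga', cer P ga' gb

/-- `P_{S_a | S_b}(S_a | S_b)` in the paper's notation. -/
noncomputable def probStructGivenStruct [DecidableEq β] {n : ℕ} (P : α × β → ℝ)
    (ga : Graph n α) (gb : Graph n β) : ℝ :=
  isoSum (fun ga' => isoSum (fun gb' => cer P ga' gb') gb) ga /
    isoSum (fun gb' => ∑ ga', cer P ga' gb') gb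

lemma probStructGivenStruct_eq [DecidableEq β] {n : ℕ} (P : α × β → ℝ) (ga : Graph n α)
    (gb : Graph n β) : probStructGivenStruct P ga gb = probStructGivenGraph P ga gb := by
  have hnum : ∀ σ gb', isoSum (fun ga' => cer P ga' (relabel σ gb')) ga
      = isoSum (fun ga' => cer P ga' gb') ga := fun σ gb' => by
    simp_rw [cer_relabel_right]
    exact isoSum_comp_relabel (fun ga' => cer P ga' gb') σ⁻¹ ga
  have hden : ∀ (σ : Equiv.Perm (Fin n)) (gb' : Graph n β),
      ∑ ga' : Graph n α, cer P ga' (relabel σ gb') = ∑ ga', cer P ga' gb' :=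
    fun σ gb' => by
      simp_rw [cer_relabel_right]
      exact (relabelEquiv σ⁻¹).sum_comp fun ga' => cer P ga' gb'
  have hcard : (#(isoClass gb) : ℝ) ≠ 0 := by
    exact_mod_cast (card_pos.2 ⟨gb, mem_isoClass_self gb⟩).ne'
  have hswap : isoSum (fun ga' => isoSum (fun gb' => cer P ga' gb') gb) ga
      = isoSum (fun gb' => isoSum (fun ga' => cer P ga' gb') ga) gb := sum_comm
  rw [probStructGivenStruct, hswap, isoSum_eq_card_mul_of_invariant hnum gb,
    isoSum_eq_card_mul_of_invariant hden gb, mul_div_mul_left _ _ hcard, probStructGivenGraph]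

lemma deviation_cases (hP0 : ∀ x, 0 ≤ P x) {n : ℕ} (hn : 2 ≤ n) {δ : ℝ} {ga : Graph n α}
    {gb : Graph n β} (hcer : cer P ga gb ≠ 0)
    (h : δ < |(Cn2 n)⁻¹ * logb 2 (probStructGivenGraph P ga gb)⁻¹ - condH P|) :
    Cn2 n * (condH P + δ) + n * -logb 2 (Fintype.card α) ≤ condInfo P ga gb ∨
    Cn2 n * (δ / 2 - condH P) + n * logb 2 (Fintype.card α) ≤ -condInfo P ga gb ∨
    Cn2 n * (δ / 2) ≤ logb 2 (isoSum (fun ga' => cer P ga' gb) ga) - logb 2 (cer P ga gb) := by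
  have hc : 0 < cer P ga gb := (cer_nonneg hP0 _ _).lt_of_ne' hcer
  have hN : cer P ga gb ≤ isoSum (fun ga' => cer P ga' gb) ga :=
    le_isoSum (fun g => cer_nonneg hP0 g gb) ga
  have hD : cer P ga gb ≤ ∑ ga', cer P ga' gb :=
    single_le_sum (fun g _ => cer_nonneg hP0 g gb) (mem_univ ga)
  have hC : 0 < Cn2 n := by
    unfold Cn2
    exact_mod_cast Nat.choose_pos hn
  have hlogN := Real.logb_le_logb_of_le one_lt_two hc hN
  rw [probStructGivenGraph, inv_div, Real.logb_div (hc.trans_le hD).ne' (hc.trans_le hN).ne',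
    logb_sum_cer_left hP0 hcer] at h
  set x := (n : ℝ) * logb 2 (Fintype.card α) + logb 2 (cer P ga gb) + condInfo P ga gb
    - logb 2 (isoSum (fun ga' => cer P ga' gb) ga) with hx_def
  have hx : Cn2 n * ((Cn2 n)⁻¹ * x) = x := mul_inv_cancel_left₀ hC.ne' x
  rcases lt_abs.1 h with hup | hlow
  · left
    linarith [mul_lt_mul_of_pos_left hup hC]
  · by_cases hclass : Cn2 n * (δ / 2) ≤ logb 2 (isoSum (fun ga' => cer P ga' gb) ga)
      - logb 2 (cer P ga gb)
    · exact Or.inr (Or.inr hclass)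
    · right; left
      linarith [mul_lt_mul_of_pos_left hlow hC, not_le.1 hclass]

lemma tendsto_prob_deviation (hP0 : ∀ x, 0 ≤ P x) (hP1 : ∑ x, P x = 1) {δ : ℝ} (hδ : 0 < δ) :
    Tendsto (fun n : ℕ => prob (fun p : Graph n α × Graph n β => cer P p.1 p.2)
        {p | δ < |(Cn2 n)⁻¹ * logb 2 (probStructGivenGraph P p.1 p.2)⁻¹ - condH P|})
      atTop (𝓝 0) := by
  have hmean := condH_eq_sum_mul_edgeInfo P
  have hup := tendsto_prob_sum_edge_ge hP0 hP1 (edgeInfo P) (a := condH P + δ)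
    (-logb 2 (Fintype.card α)) (by linarith)
  have hlow := tendsto_prob_sum_edge_ge hP0 hP1 (-edgeInfo P) (a := δ / 2 - condH P)
    (logb 2 (Fintype.card α))
    (by simp only [Pi.neg_apply, mul_neg, sum_neg_distrib, ← hmean]; linarith)
  have hclass := tendsto_prob_logb_isoSum_sub_ge (β := β) hP0 hP1 (half_pos hδ)
  refine squeeze_zero' (Eventually.of_forall fun n => prob_nonneg (fun p => cer_nonneg hP0 _ _) _)
    ?_ (by simpa only [add_zero] using (hup.add hlow).add hclass)
  filter_upwards [eventually_ge_atTop 2] with n hn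
  refine (prob_le_prob_of_support (fun p => cer_nonneg hP0 _ _) fun p hp hcer => ?_).trans
    ((prob_union_le (fun p => cer_nonneg hP0 _ _) _ _).trans
      (add_le_add_left (prob_union_le (fun p => cer_nonneg hP0 _ _) _ _) _))
  simpa [condInfo, or_assoc, hcer] using deviation_cases hP0 hn hcer hp

lemma tendsto_prob_deviation_struct [DecidableEq β] (hP0 : ∀ x, 0 ≤ P x) (hP1 : ∑ x, P x = 1)
    {δ : ℝ} (hδ : 0 < δ) :
    Tendsto (fun n : ℕ => prob (fun p : Graph n α × Graph n β => cer P p.1 p.2)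
        {p | δ < |(Cn2 n)⁻¹ * logb 2 (probStructGivenStruct P p.1 p.2)⁻¹ - condH P|})
      atTop (𝓝 0) := by
  simpa only [probStructGivenStruct_eq] using tendsto_prob_deviation hP0 hP1 hδ

end Deviation

/-- Both `C(n,2)⁻¹ log(1/P_{Sₐ|G_b}(Sₐ|G_b))` and
`C(n,2)⁻¹ log(1/P_{Sₐ|S_b}(Sₐ|S_b))` converge in probability to `H(A|B)` under the
CER model. -/
theorem stmt10 {α β : Type*} [Fintype α] [Fintype β] [DecidableEq α] [DecidableEq β]
    (P : α × β → ℝ) (hP0 : ∀ x, 0 ≤ P x) (hP1 : ∑ x, P x = 1) :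
    ∀ δ : ℝ, 0 < δ →
      (Filter.Tendsto (fun n : ℕ =>
          prob (fun p : Graph n α × Graph n β => cer P p.1 p.2)
            {p : Graph n α × Graph n β |
              δ < |(Cn2 n)⁻¹ * Real.logb 2
                  (isoSum (fun ga' => cer P ga' p.2) p.1 /
                    ∑ ga' : Graph n α, cer P ga' p.2)⁻¹ - condH P|})
        Filter.atTop (nhds 0)) ∧
      Filter.Tendsto (fun n : ℕ =>
          prob (fun p : Graph n α × Graph n β => cer P p.1 p.2)
            {p : Graph n α × Graph n β |
              δ < |(Cn2 n)⁻¹ * Real.logb 2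
                  (isoSum (fun ga' => isoSum (fun gb' => cer P ga' gb') p.2) p.1 /
                    isoSum (fun gb' => ∑ ga' : Graph n α, cer P ga' gb') p.2)⁻¹ -
                condH P|})
        Filter.atTop (nhds 0) := by
  intro δ hδ
  exact ⟨tendsto_prob_deviation hP0 hP1 hδ, tendsto_prob_deviation_struct hP0 hP1 hδ⟩


end GraphSI
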